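/- For every even n, the number of regular bent generalized Boolean functions from 𝔽₂ⁿ to ℤ₄ equals the square of the number of bent Boolean functions in n variables. -/

import Mathlib

open Finset Matrix

/-- Dot product on 𝔽₂ⁿ. -/
def dotp {n : ℕ} (u x : Fin n → ZMod 2) : ZMod 2 := ∑ j, u j * x j

/-- The character (−1)^{u·x}. -/
def chi {n : ℕ} (u x : Fin n → ZMod 2) : ℤ := (-1) ^ (dotp u x).val

/-- Walsh–Hadamard transform of a quaternary generalized Boolean function. -/
noncomputable def Wq {n : ℕ} (f : (Fin n → ZMod 2) → ZMod 4) (u : Fin n → ZMod 2) : ℂ :=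
  ∑ x : Fin n → ZMod 2, (chi u x : ℂ) * Complex.I ^ (f x).val

/-- A quaternary generalized Boolean function is bent. -/
def IsQBent {n : ℕ} (f : (Fin n → ZMod 2) → ZMod 4) : Prop :=
  ∀ u, ‖Wq f u‖ = Real.sqrt 2 ^ n

/-- A quaternary generalized Boolean function is regular bent. -/
def IsQRegularBent {n : ℕ} (f : (Fin n → ZMod 2) → ZMod 4) : Prop :=
  IsQBent f ∧ ∃ fhat : (Fin n → ZMod 2) → ZMod 4,
    ∀ u, Wq f u = (Real.sqrt 2 : ℂ) ^ n * Complex.I ^ (fhat u).val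

/-- A Boolean function in an even number `n` of variables is bent. -/
def IsBentBF {n : ℕ} (g : (Fin n → ZMod 2) → ZMod 2) : Prop :=
  ∀ u, (∑ x : Fin n → ZMod 2, chi u x * (-1) ^ (g x).val) = 2 ^ (n / 2) ∨
    (∑ x : Fin n → ZMod 2, chi u x * (-1) ^ (g x).val) = -(2 ^ (n / 2))

/-! Write each value of `f` as `a + 2b` with bits `a, b`. Since
`i ^ (a + 2b) = (1 + i) / 2 * (-1) ^ b + (1 - i) / 2 * (-1) ^ (a + b)`, the transform splits as
`H_f = (1 + i) / 2 * W_g + (1 - i) / 2 * W_h` for the Boolean functions `g = b ∘ f`, `h = (a + b) ∘ f`,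
so `Re H_f = (W_g + W_h) / 2` and `Im H_f = (W_g - W_h) / 2`. Hence `H_f(u)` is
`2 ^ (n/2)` times a fourth root of unity exactly when `W_g(u), W_h(u) ∈ {± 2 ^ (n/2)}`, and
`f ↦ (g, h)` is a bijection from regular bent quaternary functions onto pairs of bent functions. -/

open Complex

/-- Writing `t = a + 2b` with `a, b ∈ {0, 1}`, this sends `t` to `(b, a + b)`. -/
def quaternarySplit : ZMod 4 ≃ ZMod 2 × ZMod 2 where
  toFun t := ((t.val / 2 : ℕ), (t.val + t.val / 2 : ℕ))
  invFun p := ((p.1 + p.2).val + 2 * p.1.val : ℕ)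
  left_inv := by decide
  right_inv := by decide

lemma I_pow_val_eq (t : ZMod 4) :
    I ^ t.val = (1 + I) / 2 * (-1) ^ (quaternarySplit t).1.val +
      (1 - I) / 2 * (-1) ^ (quaternarySplit t).2.val := by
  have table : ∀ t : ZMod 4,
      (t.val = 0 ∧ (quaternarySplit t).1.val = 0 ∧ (quaternarySplit t).2.val = 0) ∨
      (t.val = 1 ∧ (quaternarySplit t).1.val = 0 ∧ (quaternarySplit t).2.val = 1) ∨
      (t.val = 2 ∧ (quaternarySplit t).1.val = 1 ∧ (quaternarySplit t).2.val = 1) ∨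
      (t.val = 3 ∧ (quaternarySplit t).1.val = 1 ∧ (quaternarySplit t).2.val = 0) := by
    decide
  rcases table t with ⟨h₀, h₁, h₂⟩ | ⟨h₀, h₁, h₂⟩ | ⟨h₀, h₁, h₂⟩ | ⟨h₀, h₁, h₂⟩ <;>
    simp only [h₀, h₁, h₂] <;> ring_nf <;> simp only [I_sq, I_pow_three]

def walsh {n : ℕ} (g : (Fin n → ZMod 2) → ZMod 2) (u : Fin n → ZMod 2) : ℤ :=
  ∑ x : Fin n → ZMod 2, chi u x * (-1) ^ (g x).val

lemma Wq_eq_walsh {n : ℕ} (f : (Fin n → ZMod 2) → ZMod 4) (u : Fin n → ZMod 2) :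
    Wq f u = (1 + I) / 2 * walsh (fun x => (quaternarySplit (f x)).1) u +
      (1 - I) / 2 * walsh (fun x => (quaternarySplit (f x)).2) u := by
  simp only [Wq, walsh, I_pow_val_eq, Int.cast_sum, Int.cast_mul, Int.cast_pow, Int.cast_neg,
    Int.cast_one, mul_sum, ← sum_add_distrib]
  exact sum_congr rfl fun x _ => by ring

lemma exists_eq_mul_I_pow_val_iff (z c : ℂ) :
    (∃ k : ZMod 4, z = c * I ^ k.val) ↔ z ∈ ({c, c * I, -c, -(c * I)} : Set ℂ) := by
  simp only [Set.mem_insert_iff, Set.mem_singleton_iff]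
  constructor
  · rintro ⟨k, rfl⟩
    have values : ∀ k : ZMod 4, k.val = 0 ∨ k.val = 1 ∨ k.val = 2 ∨ k.val = 3 := by decide
    rcases values k with h | h | h | h <;> simp [h, pow_succ]
  · rintro (rfl | rfl | rfl | rfl)
    exacts [⟨0, by simp⟩, ⟨1, by simp [show (1 : ZMod 4).val = 1 from rfl]⟩,
      ⟨2, by simp [show (2 : ZMod 4).val = 2 from rfl]⟩,
      ⟨3, by simp [show (3 : ZMod 4).val = 3 from rfl, pow_succ]⟩]

lemma mix_mem_mul_fourth_roots_iff (p q c : ℝ) :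
    (1 + I) / 2 * p + (1 - I) / 2 * q ∈ ({(c : ℂ), c * I, -(c : ℂ), -(c * I)} : Set ℂ) ↔
      (p = c ∨ p = -c) ∧ (q = c ∨ q = -c) := by
  have hmix : (1 + I) / 2 * p + (1 - I) / 2 * q = ⟨(p + q) / 2, (p - q) / 2⟩ := by
    rw [mk_eq_add_mul_I]; push_cast; ring
  simp only [hmix, Set.mem_insert_iff, Set.mem_singleton_iff, Complex.ext_iff, ofReal_re, ofReal_im,
    mul_re, mul_im, I_re, I_im, neg_re, neg_im]
  grind

lemma isQRegularBent_iff_exists {n : ℕ} (f : (Fin n → ZMod 2) → ZMod 4) :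
    IsQRegularBent f ↔ ∀ u, ∃ k : ZMod 4, Wq f u = (Real.sqrt 2 : ℂ) ^ n * I ^ k.val := by
  refine ⟨fun ⟨_, fhat, hfhat⟩ u => ⟨fhat u, hfhat u⟩, fun h => ?_⟩
  choose fhat hfhat using h
  refine ⟨fun u => ?_, fhat, hfhat⟩
  simp [hfhat u, abs_of_nonneg (Real.sqrt_nonneg 2)]

lemma sqrt_two_pow_of_even {n : ℕ} (hn : Even n) : Real.sqrt 2 ^ n = 2 ^ (n / 2) := by
  obtain ⟨m, rfl⟩ := hn
  rw [← two_mul, pow_mul, Real.sq_sqrt zero_le_two, Nat.mul_div_cancel_left m two_pos]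

lemma isQRegularBent_iff_isBentBF {n : ℕ} (hn : Even n) (f : (Fin n → ZMod 2) → ZMod 4) :
    IsQRegularBent f ↔
      IsBentBF (fun x => (quaternarySplit (f x)).1) ∧
        IsBentBF (fun x => (quaternarySplit (f x)).2) := by
  simp only [isQRegularBent_iff_exists, exists_eq_mul_I_pow_val_iff, Wq_eq_walsh, ← ofReal_pow,
    sqrt_two_pow_of_even hn, ← ofReal_intCast, mix_mem_mul_fourth_roots_iff, IsBentBF, ← forall_and]
  norm_cast

/-- the number of regular bent quaternary functions is the square of
the number of bent Boolean functions. -/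
theorem card_quaternary_regular_bent {n : ℕ} (hn : Even n) :
    Nat.card {f : (Fin n → ZMod 2) → ZMod 4 // IsQRegularBent f} =
      (Nat.card {g : (Fin n → ZMod 2) → ZMod 2 // IsBentBF g}) ^ 2 := by
  have e : {f : (Fin n → ZMod 2) → ZMod 4 // IsQRegularBent f} ≃
      {g : (Fin n → ZMod 2) → ZMod 2 // IsBentBF g} ×
        {g : (Fin n → ZMod 2) → ZMod 2 // IsBentBF g} :=
    ((Equiv.arrowCongr (Equiv.refl _) quaternarySplit).trans
      (Equiv.arrowProdEquivProdArrow _ _ _)).subtypeEquiv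
      (isQRegularBent_iff_isBentBF hn) |>.trans Equiv.subtypeProdEquivProd
  rw [Nat.card_congr e, Nat.card_prod, sq]
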